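/- Let R = ℤ[t, t⁻¹] be the ring of Laurent polynomials over ℤ and let n ≠ m be positive integers. If μ ∈ ℤ[t] (a polynomial with only nonnegative powers of t) lies in the ideal of R generated by nt − m, then there exists ν ∈ ℤ[t] such that μ = (nt − m)·ν as an identity in ℤ[t]. -/
import Mathlib


open LaurentPolynomial Polynomial

/-- If a genuine polynomial `μ ∈ ℤ[t]`, viewed in the Laurent polynomial ring,
lies in the ideal generated by `n·t − m` (with `n ≠ m` positive integers), then
`μ = (n·t − m)·ν` for some polynomial `ν ∈ ℤ[t]`. -/
theorem mem_span_iff_poly_factor (n m : ℕ) (hn : 0 < n) (hm : 0 < m) (hnm : n ≠ m)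
    (μ : Polynomial ℤ)
    (h : (μ.toLaurent : LaurentPolynomial ℤ) ∈
      Ideal.span {(n : LaurentPolynomial ℤ) * T 1 - (m : LaurentPolynomial ℤ)}) :
    ∃ ν : Polynomial ℤ, μ = ((n : Polynomial ℤ) * X - (m : Polynomial ℤ)) * ν := by
  rw [Ideal.mem_span_singleton] at h
  obtain ⟨g, hg⟩ := h
  obtain ⟨k, p, hp⟩ := exists_T_pow g
  have key : ((n : Polynomial ℤ) * X - (m : Polynomial ℤ)) * p = μ * X ^ k := by
    apply Polynomial.toLaurent_injective
    have : (((n : Polynomial ℤ) * X - (m : Polynomial ℤ)).toLaurent : LaurentPolynomial ℤ) =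
        (n : LaurentPolynomial ℤ) * T 1 - (m : LaurentPolynomial ℤ) := by
      push_cast [map_sub, map_mul, Polynomial.toLaurent_X]
      simp
    rw [map_mul, map_mul, this, hp, Polynomial.toLaurent_X_pow, hg, mul_assoc]
  have hXdvd : (X : Polynomial ℤ) ^ k ∣ p := by
    have hprime : Prime (X : Polynomial ℤ) := Polynomial.prime_X
    have hnd : ¬ (X : Polynomial ℤ) ∣ ((n : Polynomial ℤ) * X - (m : Polynomial ℤ)) := by
      rw [Polynomial.X_dvd_iff]
      simp only [coeff_sub, coeff_natCast_ite]
      simp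
      omega
    have : (X : Polynomial ℤ) ^ k ∣ ((n : Polynomial ℤ) * X - (m : Polynomial ℤ)) * p := by
      rw [key]; exact Dvd.intro_left μ rfl
    exact (hprime.pow_dvd_of_dvd_mul_left k hnd this)
  obtain ⟨q, hq⟩ := hXdvd
  refine ⟨q, ?_⟩
  have hXk : (X : Polynomial ℤ) ^ k ≠ 0 := pow_ne_zero _ X_ne_zero
  have : μ * X ^ k = (((n : Polynomial ℤ) * X - (m : Polynomial ℤ)) * q) * X ^ k := by
    rw [← key, hq]; ring
  exact mul_right_cancel₀ hXk this
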